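/- (Proposition 6.19: cyclic property of the trace.) Let B : H →L[K] H be any continuous K-linear operator and let T : H →L[K] H be of trace class. Then both diagonal series converge, Summable (fun m => (B (T (e m))) m) and Summable (fun m => (T (B (e m))) m), and tr (B ∘ T) = tr (T ∘ B), i.e. ∑' m, (B (T (e m))) m = ∑' m, (T (B (e m))) m. Moreover T ∘ B is uniformly traceable: for every unitary U : H →L[K] H one has HasSum (fun m => ⟪U (e m), T (B (U (e m)))⟫) (∑' m, (B (T (e m))) m). -/

import Mathlib

/-! Write `F (k, m) = A (e k) m * S (e m) k` for the products of matrix entries of two operators.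
The diagonal of `A ∘ S` is the family of sums of `F` over `k`, the diagonal of `S ∘ A` the family
of sums over `m`. If `S` is of trace class and `A` is bounded, `F` tends to zero along the
cofinite filter, so over a complete nonarchimedean field it is unconditionally summable and both
iterated sums have its total sum as their sum.

For a unitary `U`, the coordinates of a vector `y` in the basis `(U (e m))` are those of
`U⁻¹ y`, so `⟪U (e m), T (B (U (e m)))⟫` is the diagonal of `U⁻¹ ∘ T ∘ B ∘ U`. Applying the
first part to the trace class operator `U⁻¹ ∘ T` and to `B ∘ U` identifies its sum with the trace
of `B ∘ T`. -/

open Filter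

noncomputable section

variable (K : Type*) [NontriviallyNormedField K] [IsUltrametricDist K]
  [CompleteSpace K] [StarRing K] [NormedStarGroup K]

/-- The p-adic coordinate Hilbert space: zero-convergent sequences in `K` with sup norm. -/
abbrev H := ZeroAtInftyContinuousMap ℕ K

/-- The standard basis vectors of `H K`. -/
def e (n : ℕ) : H K where
  toFun := fun m => if m = n then 1 else 0
  continuous_toFun := continuous_of_discreteTopology
  zero_at_infty' := by
    rw [cocompact_eq_atTop]
    refine Filter.Tendsto.congr' ?_ tendsto_const_nhds
    filter_upwards [Filter.eventually_gt_atTop n] with m hm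
    simp [Nat.ne_of_gt hm]

/-- The canonical inner product on `H K`: `⟪x, y⟫ = ∑' i, star (x i) * y i`. -/
def inner' (x y : H K) : K := ∑' i, star (x i) * y i

/-- A bounded operator is of trace class if its matrix entries vanish along the
cofinite filter of `ℕ × ℕ`. -/
def IsTraceClass (T : H K →L[K] H K) : Prop :=
  Tendsto (fun q : ℕ × ℕ => (T (e K q.2)) q.1) Filter.cofinite (nhds 0)

open scoped ZeroAtInfty

namespace ZeroAtInftyContinuousMap

variable {α β ι : Type*} [TopologicalSpace α]

instance [PseudoMetricSpace β] [Zero β] : ContinuousEvalConst C₀(α, β) α β where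
  continuous_eval_const x :=
    (continuous_eval_const (F := BoundedContinuousFunction α β) x).comp isometry_toBCF.continuous

def evalAddMonoidHom [AddMonoid β] [TopologicalSpace β] [ContinuousAdd β] (x : α) :
    C₀(α, β) →+ β where
  toFun f := f x
  map_zero' := rfl
  map_add' _ _ := rfl

theorem sum_apply [AddCommMonoid β] [TopologicalSpace β] [ContinuousAdd β] (s : Finset ι)
    (f : ι → C₀(α, β)) (x : α) : (∑ i ∈ s, f i) x = ∑ i ∈ s, f i x :=
  map_sum (evalAddMonoidHom x) f s

theorem hasSum_apply [AddCommMonoid β] [PseudoMetricSpace β] [ContinuousAdd β]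
    {f : ι → C₀(α, β)} {g : C₀(α, β)} (h : HasSum f g) (x : α) :
    HasSum (fun i => f i x) (g x) :=
  h.map (evalAddMonoidHom x) (continuous_eval_const x)

theorem norm_apply_le [SeminormedAddCommGroup β] (f : C₀(α, β)) (x : α) : ‖f x‖ ≤ ‖f‖ :=
  f.toBCF.norm_coe_le_norm x

theorem norm_le [SeminormedAddCommGroup β] {f : C₀(α, β)} {C : ℝ} (hC : 0 ≤ C) :
    ‖f‖ ≤ C ↔ ∀ x, ‖f x‖ ≤ C :=
  BoundedContinuousFunction.norm_le hC

theorem tendsto_cofinite [DiscreteTopology α] [Zero β] [TopologicalSpace β] (f : C₀(α, β)) :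
    Tendsto f cofinite (nhds 0) := by
  simpa [cocompact_eq_cofinite] using zero_at_infty f

theorem tendsto_uncurry_cofinite_zero_iff [DiscreteTopology α] [SeminormedAddCommGroup β]
    {f : ι → C₀(α, β)} :
    Tendsto (fun q : α × ι => f q.2 q.1) cofinite (nhds 0) ↔
      Tendsto (fun i => ‖f i‖) cofinite (nhds 0) := by
  simp only [Metric.nhds_basis_closedBall.tendsto_right_iff, mem_closedBall_zero_iff, norm_norm]
  refine forall₂_congr fun ε hε => ?_
  rw [← coprod_cofinite, Filter.Eventually, mem_coprod_iff]
  constructor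
  · rintro ⟨-, t, ht, hsub⟩
    filter_upwards [ht] with i hi
    exact (norm_le hε.le).2 fun x => hsub (show (x, i).2 ∈ t from hi)
  · intro hcol
    have hrows : ∀ᶠ x in cofinite, ∀ i ∈ {i | ¬ ‖f i‖ ≤ ε}, ‖f i x‖ ≤ ε :=
      (eventually_all_finite (eventually_cofinite.1 hcol)).2 fun i _ =>
        (Metric.nhds_basis_closedBall.tendsto_right_iff.1 (tendsto_cofinite (f i)) ε hε).mono
          fun x hx => mem_closedBall_zero_iff.1 hx
    refine ⟨⟨_, hrows, fun q hq => ?_⟩, ⟨_, hcol, fun q hq => (norm_apply_le _ _).trans hq⟩⟩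
    by_cases hi : ‖f q.2‖ ≤ ε
    · exact (norm_apply_le _ _).trans hi
    · exact hq q.2 hi

end ZeroAtInftyContinuousMap

theorem NonarchimedeanAddGroup.exists_hasSum_prod_fiberwise {G β γ : Type*} [AddCommGroup G]
    [UniformSpace G] [IsUniformAddGroup G] [NonarchimedeanAddGroup G] [CompleteSpace G]
    {F : β × γ → G} (hF : Tendsto F cofinite (nhds 0)) {f : β → G} {g : γ → G}
    (hf : ∀ b, HasSum (fun c => F (b, c)) (f b)) (hg : ∀ c, HasSum (fun b => F (b, c)) (g c)) :
    ∃ a, HasSum f a ∧ HasSum g a := by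
  have hF := (summable_of_tendsto_cofinite_zero hF).hasSum
  exact ⟨_, hF.prod_fiberwise hf, ((Equiv.prodComm γ β).hasSum_iff.2 hF).prod_fiberwise hg⟩

open ZeroAtInftyContinuousMap

section

variable {𝕜 : Type*} [NontriviallyNormedField 𝕜]

theorem e_apply (n m : ℕ) : e 𝕜 n m = if m = n then 1 else 0 := rfl

theorem norm_e_le (n : ℕ) : ‖e 𝕜 n‖ ≤ 1 :=
  (norm_le zero_le_one).2 fun m => by rw [e_apply]; split_ifs <;> simp

theorem sum_smul_e_apply (x : H 𝕜) (s : Finset ℕ) (i : ℕ) :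
    (∑ m ∈ s, x m • e 𝕜 m) i = if i ∈ s then x i else 0 := by
  simp [ZeroAtInftyContinuousMap.sum_apply, e_apply]

theorem hasSum_smul_e (x : H 𝕜) : HasSum (fun m => x m • e 𝕜 m) x := by
  refine Metric.nhds_basis_closedBall.tendsto_right_iff.2 fun ε hε => ?_
  have hfin : {i | ¬ ‖x i‖ ≤ ε}.Finite := eventually_cofinite.1 <|
    (Metric.nhds_basis_closedBall.tendsto_right_iff.1 (tendsto_cofinite x) ε hε).mono
      fun i hi => mem_closedBall_zero_iff.1 hi
  filter_upwards [eventually_ge_atTop hfin.toFinset] with s hs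
  rw [Metric.mem_closedBall, dist_eq_norm, norm_le hε.le]
  intro i
  rw [ZeroAtInftyContinuousMap.sub_apply, sum_smul_e_apply]
  split_ifs with hi
  · simpa using hε.le
  · simpa using not_not.1 fun h => hi (hs (hfin.mem_toFinset.2 h))

theorem ContinuousLinearMap.hasSum_apply_e_mul (A : H 𝕜 →L[𝕜] H 𝕜) (x : H 𝕜) (i : ℕ) :
    HasSum (fun k => A (e 𝕜 k) i * x k) (A x i) := by
  simpa [mul_comm] using hasSum_apply (A.hasSum (hasSum_smul_e x)) i

theorem ContinuousLinearMap.norm_apply_e_apply_le (A : H 𝕜 →L[𝕜] H 𝕜) (k i : ℕ) :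
    ‖A (e 𝕜 k) i‖ ≤ ‖A‖ :=
  (norm_apply_le _ i).trans <| by simpa using A.le_opNorm_of_le (norm_e_le k)

theorem isTraceClass_iff {T : H 𝕜 →L[𝕜] H 𝕜} :
    IsTraceClass 𝕜 T ↔ Tendsto (fun k => ‖T (e 𝕜 k)‖) cofinite (nhds 0) :=
  tendsto_uncurry_cofinite_zero_iff (f := fun k => T (e 𝕜 k))

theorem IsTraceClass.clm_comp {T : H 𝕜 →L[𝕜] H 𝕜} (hT : IsTraceClass 𝕜 T)
    (A : H 𝕜 →L[𝕜] H 𝕜) : IsTraceClass 𝕜 (A ∘L T) := by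
  rw [isTraceClass_iff] at hT ⊢
  exact squeeze_zero (fun _ => norm_nonneg _) (fun k => A.le_opNorm (T (e 𝕜 k)))
    (by simpa using hT.const_mul ‖A‖)

theorem IsTraceClass.exists_hasSum_diag_comp [IsUltrametricDist 𝕜] [CompleteSpace 𝕜]
    {S : H 𝕜 →L[𝕜] H 𝕜} (hS : IsTraceClass 𝕜 S) (A : H 𝕜 →L[𝕜] H 𝕜) :
    ∃ a, HasSum (fun m => A (S (e 𝕜 m)) m) a ∧ HasSum (fun k => S (A (e 𝕜 k)) k) a := by
  have hF : Tendsto (fun q : ℕ × ℕ => A (e 𝕜 q.1) q.2 * S (e 𝕜 q.2) q.1) cofinite (nhds 0) :=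
    squeeze_zero_norm (fun q => (norm_mul_le _ _).trans
      (mul_le_mul_of_nonneg_right (A.norm_apply_e_apply_le _ _) (norm_nonneg _)))
      (by simpa using hS.norm.const_mul ‖A‖)
  obtain ⟨a, hSA, hAS⟩ := NonarchimedeanAddGroup.exists_hasSum_prod_fiberwise hF
    (fun k => by simpa only [mul_comm] using S.hasSum_apply_e_mul (A (e 𝕜 k)) k)
    (fun m => A.hasSum_apply_e_mul (S (e 𝕜 m)) m)
  exact ⟨a, hAS, hSA⟩

theorem inner'_e_left [StarRing 𝕜] (m : ℕ) (y : H 𝕜) : inner' 𝕜 (e 𝕜 m) y = y m :=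
  (tsum_eq_single m fun i hi => by simp [e_apply, hi]).trans (by simp [e_apply])

theorem IsTraceClass.hasSum_inner_comp_unitary [IsUltrametricDist 𝕜] [CompleteSpace 𝕜]
    [StarRing 𝕜] {T : H 𝕜 →L[𝕜] H 𝕜} (hT : IsTraceClass 𝕜 T) (B : H 𝕜 →L[𝕜] H 𝕜)
    (U : H 𝕜 ≃ₗᵢ[𝕜] H 𝕜) (hU : ∀ x y, inner' 𝕜 (U x) (U y) = inner' 𝕜 x y) :
    HasSum (fun m => inner' 𝕜 (U (e 𝕜 m)) (T (B (U (e 𝕜 m))))) (∑' m, B (T (e 𝕜 m)) m) := by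
  have hcoef : ∀ y m, inner' 𝕜 (U (e 𝕜 m)) y = U.symm y m := fun y m => by
    simpa [inner'_e_left] using hU (e 𝕜 m) (U.symm y)
  obtain ⟨a, hBT, hTB⟩ := (hT.clm_comp (U.symm : H 𝕜 →L[𝕜] H 𝕜)).exists_hasSum_diag_comp
    (B ∘L (U : H 𝕜 →L[𝕜] H 𝕜))
  simp only [ContinuousLinearMap.comp_apply, LinearIsometryEquiv.coe_coe'',
    LinearIsometryEquiv.apply_symm_apply] at hBT hTB
  simpa only [hcoef, hBT.tsum_eq] using hTB

end

/-- Cyclic property of the trace: `tr (B ∘ T) = tr (T ∘ B)` for `B` bounded and `T` of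
trace class; moreover `T ∘ B` is uniformly traceable. -/
theorem stmt13 (B T : H K →L[K] H K) (hT : IsTraceClass K T) :
    Summable (fun m => (B (T (e K m))) m) ∧
    Summable (fun m => (T (B (e K m))) m) ∧
    (∑' m, (B (T (e K m))) m) = (∑' m, (T (B (e K m))) m) ∧
    (∀ U : H K →L[K] H K, Function.Surjective U → (∀ x : H K, ‖U x‖ = ‖x‖) →
      (∀ x y : H K, inner' K (U x) (U y) = inner' K x y) →
      HasSum (fun m => inner' K (U (e K m)) (T (B (U (e K m)))))
        (∑' m, (B (T (e K m))) m)) := by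
  obtain ⟨a, hBT, hTB⟩ := hT.exists_hasSum_diag_comp B
  refine ⟨hBT.summable, hTB.summable, hBT.tsum_eq.trans hTB.tsum_eq.symm,
    fun U hsurj hnorm hinner => ?_⟩
  exact hT.hasSum_inner_comp_unitary B (LinearIsometryEquiv.ofSurjective ⟨U, hnorm⟩ hsurj) hinner
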